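/- arXiv:0907.5228 — 2 statements merged into one kernel-verified Lean document; each statement's English description precedes it below -/
import Mathlib

section
/- In a graph where every node has degree at most μ, the number of connected subsets of nodes of size l that contain a given fixed node is at most e^{τl}, where τ = μ·ln 2. -/
namespace ConnCount

variable {V : Type*} [Fintype V] [DecidableEq V] [LinearOrder V]
variable (Γ : SimpleGraph V) [DecidableRel Γ.Adj]

/-- Sorted list of neighbors of a vertex. -/
def nbrs (w : V) : List V := (Γ.neighborFinset w).sort (· ≤ ·)

lemma mem_nbrs {w u : V} : u ∈ nbrs Γ w ↔ Γ.Adj w u := by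
  simp [nbrs, Finset.mem_sort, SimpleGraph.mem_neighborFinset]

/-- Canonical BFS-like exploration of the set `S` starting at `v`. -/
def exploreS (S : Finset V) (v : V) : ℕ → List V
  | 0 => [v]
  | (i+1) =>
    if h : i < (exploreS S v i).length then
      exploreS S v i ++
        ((Γ.neighborFinset ((exploreS S v i).get ⟨i, h⟩) ∩ S) \
          (exploreS S v i).toFinset).sort (· ≤ ·)
    else exploreS S v i

/-- Exploration driven by a code. -/
def explore (v : V) (c : ℕ → Finset ℕ) : ℕ → List V
  | 0 => [v]
  | (i+1) =>
    if h : i < (explore v c i).length then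
      explore v c i ++
        (((c i).image (fun k =>
            (nbrs Γ ((explore v c i).get ⟨i, h⟩)).getD k ((explore v c i).get ⟨i, h⟩))) \
          (explore v c i).toFinset).sort (· ≤ ·)
    else explore v c i

/-- The code of a set `S`. -/
def codeOf (S : Finset V) (v : V) (i : ℕ) : Finset ℕ :=
  if h : i < (exploreS Γ S v i).length then
    (Γ.neighborFinset ((exploreS Γ S v i).get ⟨i, h⟩) ∩ S).image
      (fun u => ((nbrs Γ ((exploreS Γ S v i).get ⟨i, h⟩)).idxOf u))
  else ∅

lemma exploreS_prefix (S : Finset V) (v : V) (i : ℕ) :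
    exploreS Γ S v i <+: exploreS Γ S v (i+1) := by
  rw [exploreS]
  split
  · exact List.prefix_append _ _
  · exact List.prefix_refl _

lemma exploreS_prefix_le (S : Finset V) (v : V) {i j : ℕ} (hij : i ≤ j) :
    exploreS Γ S v i <+: exploreS Γ S v j := by
  induction j with
  | zero => simpa [Nat.le_zero.mp hij]
  | succ j ih =>
    rcases Nat.lt_or_ge i (j+1) with h | h
    · exact (ih (Nat.lt_succ_iff.mp h)).trans (exploreS_prefix Γ S v j)
    · have : i = j + 1 := le_antisymm hij h
      simp [this]

lemma mem_exploreS_self (S : Finset V) (v : V) (i : ℕ) : v ∈ exploreS Γ S v i := by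
  have h0 : v ∈ exploreS Γ S v 0 := by simp [exploreS]
  exact (exploreS_prefix_le Γ S v (Nat.zero_le i)).subset h0

lemma exploreS_subset (S : Finset V) (v : V) (hv : v ∈ S) :
    ∀ i, ∀ u ∈ exploreS Γ S v i, u ∈ S := by
  intro i
  induction i with
  | zero => intro u hu; simp [exploreS] at hu; simpa [hu]
  | succ i ih =>
    intro u hu
    rw [exploreS] at hu
    split at hu
    · rcases List.mem_append.mp hu with h | h
      · exact ih u h
      · have := Finset.mem_sort (α := V) (· ≤ ·) |>.mp h
        have := Finset.mem_sdiff.mp this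
        exact (Finset.mem_inter.mp this.1).2
    · exact ih u hu

lemma exploreS_nodup (S : Finset V) (v : V) : ∀ i, (exploreS Γ S v i).Nodup := by
  intro i
  induction i with
  | zero => simp [exploreS]
  | succ i ih =>
    rw [exploreS]
    split
    · refine List.Nodup.append ih (Finset.sort_nodup _ _) ?_
      intro a ha hb
      have := Finset.mem_sort (α := V) (· ≤ ·) |>.mp hb
      exact (Finset.mem_sdiff.mp this).2 (List.mem_toFinset.mpr ha)
    · exact ih

lemma exploreS_closed (S : Finset V) (v : V) :
    ∀ i j, j < i → ∀ w, (exploreS Γ S v i)[j]? = some w →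
      Γ.neighborFinset w ∩ S ⊆ (exploreS Γ S v i).toFinset := by
  intro i
  induction i with
  | zero => omega
  | succ i ih =>
    intro j hj w hw
    have hpre : exploreS Γ S v i <+: exploreS Γ S v (i+1) := exploreS_prefix Γ S v i
    have hsub : (exploreS Γ S v i).toFinset ⊆ (exploreS Γ S v (i+1)).toFinset := by
      intro x hx
      exact List.mem_toFinset.mpr (hpre.subset (List.mem_toFinset.mp hx))
    by_cases h : i < (exploreS Γ S v i).length
    · rcases Nat.lt_or_ge j i with hji | hji
      · -- earlier index: use IH
        have hjlen : j < (exploreS Γ S v i).length := lt_trans hji h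
        have hw' : (exploreS Γ S v i)[j]? = some w := by
          rw [List.getElem?_eq_getElem hjlen]
          have := hpre.getElem hjlen
          rw [List.getElem?_eq_some_iff] at hw
          obtain ⟨hlen2, hval⟩ := hw
          simp [this, hval]
        exact fun x hx => hsub (ih j hji w hw' hx)
      · -- j = i
        have hji' : j = i := le_antisymm (Nat.lt_succ_iff.mp hj) hji
        subst hji'
        have heq : exploreS Γ S v (j+1) =
            exploreS Γ S v j ++
              ((Γ.neighborFinset ((exploreS Γ S v j).get ⟨j, h⟩) ∩ S) \
                (exploreS Γ S v j).toFinset).sort (· ≤ ·) := by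
          rw [exploreS]; simp [h]
        have hwval : w = (exploreS Γ S v j).get ⟨j, h⟩ := by
          have := hpre.getElem h
          rw [List.getElem?_eq_some_iff] at hw
          obtain ⟨hlen2, hval⟩ := hw
          simp only [List.get_eq_getElem]
          rw [this, hval]
        intro x hx
        by_cases hxL : x ∈ (exploreS Γ S v j).toFinset
        · exact hsub hxL
        · rw [heq]
          rw [List.toFinset_append]
          apply Finset.mem_union_right
          rw [List.mem_toFinset, Finset.mem_sort]
          rw [Finset.mem_sdiff]
          exact ⟨by rwa [hwval] at hx, hxL⟩
    · -- no step taken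
      have heq : exploreS Γ S v (i+1) = exploreS Γ S v i := by
        rw [exploreS]; simp [h]
      rw [heq] at hw ⊢
      have hjlen : j < (exploreS Γ S v i).length := by
        rw [List.getElem?_eq_some_iff] at hw; exact hw.1
      exact ih j (lt_of_lt_of_le hjlen (Nat.le_of_not_lt h)) w hw

lemma exploreS_length_le (S : Finset V) (v : V) (hv : v ∈ S) (i : ℕ) :
    (exploreS Γ S v i).length ≤ S.card := by
  have h1 : (exploreS Γ S v i).toFinset.card = (exploreS Γ S v i).length :=
    List.toFinset_card_of_nodup (exploreS_nodup Γ S v i)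
  have h2 : (exploreS Γ S v i).toFinset ⊆ S := by
    intro u hu
    exact exploreS_subset Γ S v hv i u (List.mem_toFinset.mp hu)
  calc (exploreS Γ S v i).length = (exploreS Γ S v i).toFinset.card := h1.symm
    _ ≤ S.card := Finset.card_le_card h2

/-- Main correctness: for connected `S` containing `v`, the exploration after
`S.card` steps recovers `S`. -/
lemma exploreS_eq (S : Finset V) (v : V) (hv : v ∈ S)
    (hconn : (Γ.induce (S : Set V)).Connected) :
    (exploreS Γ S v S.card).toFinset = S := by
  set l := S.card with hl
  have hlen : (exploreS Γ S v l).length ≤ l := exploreS_length_le Γ S v hv l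
  have hstep : ∀ a b : V, a ∈ (exploreS Γ S v l).toFinset → Γ.Adj a b → b ∈ S →
      b ∈ (exploreS Γ S v l).toFinset := by
    intro a b ha hadj hb
    obtain ⟨j, hj, hget⟩ := List.mem_iff_getElem.mp (List.mem_toFinset.mp ha)
    have hw : (exploreS Γ S v l)[j]? = some a := by
      rw [List.getElem?_eq_getElem hj, hget]
    exact exploreS_closed Γ S v l j (lt_of_lt_of_le hj hlen) a hw
      (Finset.mem_inter.mpr ⟨SimpleGraph.mem_neighborFinset _ _ _ |>.mpr hadj, hb⟩)
  apply Finset.Subset.antisymm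
  · intro u hu
    exact exploreS_subset Γ S v hv l u (List.mem_toFinset.mp hu)
  · intro u hu
    have hreach := hconn.preconnected ⟨v, by simpa using hv⟩ ⟨u, by simpa using hu⟩
    obtain ⟨p⟩ := hreach
    have key : ∀ (x y : ↥(S : Set V)) (p : (Γ.induce (S : Set V)).Walk x y),
        (x : V) ∈ (exploreS Γ S v l).toFinset → (y : V) ∈ (exploreS Γ S v l).toFinset := by
      intro x y p
      induction p with
      | nil => exact id
      | @cons a b c h p ih =>
        intro hx
        have hadj : Γ.Adj (a : V) (b : V) := by simpa using h
        exact ih (hstep _ _ hx hadj (by simpa using b.2))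
    exact key _ _ p (List.mem_toFinset.mpr (mem_exploreS_self Γ S v l))

lemma explore_eq_exploreS (S : Finset V) (v : V) (c : ℕ → Finset ℕ) :
    ∀ i, (∀ j < i, c j = codeOf Γ S v j) → explore Γ v c i = exploreS Γ S v i := by
  intro i
  induction i with
  | zero => intro _; rfl
  | succ i ih =>
    intro hc
    have hih : explore Γ v c i = exploreS Γ S v i :=
      ih (fun j hj => hc j (lt_trans hj (Nat.lt_succ_self i)))
    rw [explore, exploreS, hih]
    by_cases h : i < (exploreS Γ S v i).length
    · rw [dif_pos h, dif_pos h]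
      set w := (exploreS Γ S v i).get ⟨i, h⟩ with hw
      have hcode : c i = (Γ.neighborFinset w ∩ S).image
          (fun u => ((nbrs Γ w).idxOf u)) := by
        rw [hc i (Nat.lt_succ_self i), codeOf, dif_pos h]
      have : ∀ u ∈ Γ.neighborFinset w ∩ S,
          ((fun k => (nbrs Γ w).getD k w) ∘ fun u => (nbrs Γ w).idxOf u) u = u := by
        intro u hu
        have humem : u ∈ nbrs Γ w := by
          rw [mem_nbrs]
          exact SimpleGraph.mem_neighborFinset _ _ _ |>.mp (Finset.mem_inter.mp hu).1
        have hidx : (nbrs Γ w).idxOf u < (nbrs Γ w).length :=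
          List.idxOf_lt_length_iff.mpr humem
        simp only [Function.comp_apply]
        rw [List.getD_eq_getElem _ _ hidx, List.getElem_idxOf]
      have himg : (c i).image (fun k => (nbrs Γ w).getD k w) = Γ.neighborFinset w ∩ S := by
        rw [hcode, Finset.image_image]
        exact (Finset.image_congr this).trans Finset.image_id'
      rw [himg]
    · rw [dif_neg h, dif_neg h]

lemma codeOf_subset_range (S : Finset V) (v : V) (i : ℕ) {μ : ℕ}
    (hdeg : ∀ w : V, Γ.degree w ≤ μ) : codeOf Γ S v i ⊆ Finset.range μ := by
  rw [codeOf]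
  split
  · intro k hk
    rw [Finset.mem_image] at hk
    obtain ⟨u, hu, hku⟩ := hk
    set w := (exploreS Γ S v i).get _
    have humem : u ∈ nbrs Γ w := by
      rw [mem_nbrs]
      exact SimpleGraph.mem_neighborFinset _ _ _ |>.mp (Finset.mem_inter.mp hu).1
    have hidx : (nbrs Γ w).idxOf u < (nbrs Γ w).length :=
      List.idxOf_lt_length_iff.mpr humem
    have hlen : (nbrs Γ w).length = Γ.degree w := by
      rw [nbrs, Finset.length_sort, SimpleGraph.card_neighborFinset_eq_degree]
    rw [Finset.mem_range, ← hku]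
    exact lt_of_lt_of_le (by rw [← hlen]; exact hidx) (hdeg w)
  · simp

end ConnCount

open ConnCount

/-- In a graph where every node has degree at most μ, the number of connected
subsets of nodes of size `l` that contain a given fixed node is at most
`e^{τ l}` with `τ = μ ln 2`. -/
theorem stmt0 {V : Type*} [Fintype V] [DecidableEq V] (Γ : SimpleGraph V)
    [DecidableRel Γ.Adj] (μ : ℕ) (hdeg : ∀ w : V, Γ.degree w ≤ μ)
    (v : V) (l : ℕ) :
    ({S : Finset V | v ∈ S ∧ S.card = l ∧ (Γ.induce (S : Set V)).Connected}).ncard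
      ≤ Real.exp ((μ * Real.log 2) * l) := by
  classical
  letI : LinearOrder V := LinearOrder.lift' (Fintype.equivFin V) (Equiv.injective _)
  set P := {S : Finset V | v ∈ S ∧ S.card = l ∧ (Γ.induce (S : Set V)).Connected} with hP
  -- the encoding map
  set F : P → (Fin l → Finset (Fin μ)) := fun S i =>
    Finset.univ.filter (fun k : Fin μ => (k : ℕ) ∈ codeOf Γ S.1 v i) with hF
  have hinj : Function.Injective F := by
    rintro ⟨S, hS⟩ ⟨S', hS'⟩ hFS
    obtain ⟨hvS, hcard, hconn⟩ := id hS
    obtain ⟨hvS', hcard', hconn'⟩ := id hS'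
    have hcodes : ∀ i < l, codeOf Γ S v i = codeOf Γ S' v i := by
      intro i hi
      have hfi := congrFun hFS ⟨i, hi⟩
      ext k
      by_cases hk : k < μ
      · have h2 : (⟨k, hk⟩ : Fin μ) ∈ F ⟨S, hS⟩ ⟨i, hi⟩ ↔
            (⟨k, hk⟩ : Fin μ) ∈ F ⟨S', hS'⟩ ⟨i, hi⟩ := by
          rw [hfi]
        simpa [hF, Finset.mem_filter] using h2
      · constructor
        · intro hkc
          exact absurd (Finset.mem_range.mp (codeOf_subset_range Γ S v i hdeg hkc)) hk
        · intro hkc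
          exact absurd (Finset.mem_range.mp (codeOf_subset_range Γ S' v i hdeg hkc)) hk
    have hS1 : (explore Γ v (fun i => codeOf Γ S v i) l).toFinset = S := by
      rw [explore_eq_exploreS Γ S v _ l (fun j _ => rfl)]
      rw [← hcard]
      exact exploreS_eq Γ S v hvS hconn
    have hS2 : (explore Γ v (fun i => codeOf Γ S v i) l).toFinset = S' := by
      rw [explore_eq_exploreS Γ S' v _ l (fun j hj => hcodes j hj)]
      rw [← hcard']
      exact exploreS_eq Γ S' v hvS' hconn'
    exact Subtype.ext (hS1.symm.trans hS2)
  have hcount : P.ncard ≤ 2 ^ (μ * l) := by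
    have h1 : Nat.card P ≤ Nat.card (Fin l → Finset (Fin μ)) :=
      Nat.card_le_card_of_injective F hinj
    rw [Nat.card_coe_set_eq] at h1
    calc P.ncard ≤ Nat.card (Fin l → Finset (Fin μ)) := h1
      _ = 2 ^ (μ * l) := by
          rw [Nat.card_eq_fintype_card, Fintype.card_fun, Fintype.card_finset,
            Fintype.card_fin, Fintype.card_fin, ← pow_mul]
  calc (P.ncard : ℝ) ≤ ((2 : ℕ) ^ (μ * l) : ℕ) := by exact_mod_cast hcount
    _ = Real.exp ((μ * Real.log 2) * l) := by
        push_cast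
        rw [show ((μ : ℝ) * Real.log 2) * l = ((μ * l : ℕ) : ℝ) * Real.log 2 by push_cast; ring,
          Real.exp_nat_mul, Real.exp_log two_pos]
end

section
/- Let L be a self-adjoint operator on a finite-dimensional Hilbert space with ⟨A, L(A)⟩ ≤ 0 for all A, and suppose A is a unit vector with -⟨A, L(A)⟩ ≤ ε. Then for all t ≥ 0, ⟨A, e^{Lt}(A)⟩ ≥ e^{-εt}. -/
open scoped InnerProductSpace

/-
In an orthonormal eigenbasis `bᵢ` of `L` with eigenvalues `μᵢ`, the weights `wᵢ = ⟪bᵢ, A⟫²`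
of a unit vector `A` form a probability vector, and `⟪A, L A⟫ = ∑ wᵢ μᵢ`,
`⟪A, e^{tL} A⟫ = ∑ wᵢ e^{t μᵢ}`. Jensen's inequality for `exp` then gives
`e^{-εt} ≤ e^{t ⟪A, L A⟫} ≤ ⟪A, e^{tL} A⟫`.
-/

theorem NormedSpace.exp_apply_of_apply_eq_smul {E : Type*} [NormedAddCommGroup E]
    [NormedSpace ℝ E] [CompleteSpace E] {T : E →L[ℝ] E} {v : E} {μ : ℝ}
    (h : T v = μ • v) : exp T v = Real.exp μ • v := by
  have hpow : ∀ n : ℕ, (T ^ n) v = μ ^ n • v := by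
    intro n
    induction n with
    | zero => simp
    | succ n ih => rw [pow_succ', mul_apply_eq_comp, ih, map_smul, h, smul_smul, pow_succ]
  have hT := (exp_series_hasSum_exp' (𝕂 := ℝ) T).mapL (ContinuousLinearMap.apply ℝ E v)
  have hμ := (exp_series_hasSum_exp' (𝕂 := ℝ) μ).smul_const v
  rw [← Real.exp_eq_exp_ℝ] at hμ
  refine hT.unique (hμ.congr_fun fun n => ?_)
  simp [hpow, smul_smul]

theorem OrthonormalBasis.inner_self_apply_eq_sum {ι E : Type*} [Fintype ι]
    [NormedAddCommGroup E] [InnerProductSpace ℝ E] (b : OrthonormalBasis ι ℝ E)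
    {S : E →ₗ[ℝ] E} {g : ι → ℝ} (hS : ∀ i, S (b i) = g i • b i) (x : E) :
    ⟪x, S x⟫_ℝ = ∑ i, ⟪b i, x⟫_ℝ ^ 2 * g i := by
  have hSx : S x = ∑ i, (⟪b i, x⟫_ℝ * g i) • b i := by
    conv_lhs => rw [← b.sum_repr' x]
    simp only [map_sum, map_smul, hS, smul_smul]
  simp only [hSx, inner_sum, inner_smul_right, real_inner_comm x]
  exact Finset.sum_congr rfl fun i _ => by ring

theorem LinearMap.IsSymmetric.exp_inner_le_inner_exp {E : Type*} [NormedAddCommGroup E]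
    [InnerProductSpace ℝ E] [FiniteDimensional ℝ E] {T : E →L[ℝ] E}
    (hT : (T : E →ₗ[ℝ] E).IsSymmetric) {x : E} (hx : ‖x‖ = 1) :
    Real.exp ⟪x, T x⟫_ℝ ≤ ⟪x, NormedSpace.exp T x⟫_ℝ := by
  set b := hT.eigenvectorBasis rfl
  have heig : ∀ i, T (b i) = hT.eigenvalues rfl i • b i := hT.apply_eigenvectorBasis rfl
  have hweights : ∑ i, ⟪b i, x⟫_ℝ ^ 2 = 1 := by rw [b.sum_sq_inner_right, hx, one_pow]
  have hT_eq : ⟪x, T x⟫_ℝ = _ := b.inner_self_apply_eq_sum (S := T) heig x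
  have hexp_eq : ⟪x, NormedSpace.exp T x⟫_ℝ = _ :=
    b.inner_self_apply_eq_sum (S := (NormedSpace.exp T : E →L[ℝ] E))
      (fun i => NormedSpace.exp_apply_of_apply_eq_smul (heig i)) x
  rw [hT_eq, hexp_eq]
  exact convexOn_exp.map_sum_le (fun i _ => sq_nonneg _) hweights fun i _ => Set.mem_univ _

theorem stmt11_general {E : Type*} [NormedAddCommGroup E] [InnerProductSpace ℝ E]
    [FiniteDimensional ℝ E] (L : E →L[ℝ] E)
    (hsa : ∀ x y : E, ⟪L x, y⟫_ℝ = ⟪x, L y⟫_ℝ)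
    (A : E) (hA : ⟪A, A⟫_ℝ = 1) (ε : ℝ) (hε : -⟪A, L A⟫_ℝ ≤ ε) :
    ∀ t : ℝ, 0 ≤ t → Real.exp (-ε * t) ≤ ⟪A, (NormedSpace.exp (t • L)) A⟫_ℝ := by
  intro t ht
  have hsym : ((t • L : E →L[ℝ] E) : E →ₗ[ℝ] E).IsSymmetric :=
    LinearMap.IsSymmetric.smul (T := (L : E →ₗ[ℝ] E)) (by simp) hsa
  have hnorm : ‖A‖ = 1 := by rw [norm_eq_sqrt_real_inner, hA, Real.sqrt_one]
  calc Real.exp (-ε * t) ≤ Real.exp ⟪A, (t • L) A⟫_ℝ := by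
        rw [smul_apply, real_inner_smul_right]
        exact Real.exp_le_exp.mpr (by nlinarith)
    _ ≤ _ := hsym.exp_inner_le_inner_exp hnorm

/-- If `L` is self-adjoint and negative semidefinite, `⟨A,A⟩ = 1` and
`-⟨A, L A⟩ ≤ ε`, then the autocorrelation satisfies
`⟨A, e^{Lt} A⟩ ≥ e^{-εt}` for all `t ≥ 0`. -/
theorem stmt11 {E : Type*} [NormedAddCommGroup E] [InnerProductSpace ℝ E]
    [FiniteDimensional ℝ E] (L : E →L[ℝ] E)
    (hsa : ∀ x y : E, ⟪L x, y⟫_ℝ = ⟪x, L y⟫_ℝ)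
    (hneg : ∀ x : E, ⟪x, L x⟫_ℝ ≤ 0)
    (A : E) (hA : ⟪A, A⟫_ℝ = 1) (ε : ℝ) (hε : -⟪A, L A⟫_ℝ ≤ ε) :
    ∀ t : ℝ, 0 ≤ t → Real.exp (-ε * t) ≤ ⟪A, (NormedSpace.exp (t • L)) A⟫_ℝ :=
  stmt11_general L hsa A hA ε hε
end
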